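/- arXiv:1212.1813 — 10 statements merged into one kernel-verified Lean document; each statement's English description precedes it below -/
import Mathlib

section
/- Let Λ ⊂ ℝⁿ be an arbitrary set and g ∈ ℝ[x₁,…,xₙ]. Define f₁ : ℝ^{n+1} → ℝ^{n+1} by f₁(x, x_{n+1}) = (x, x_{n+1}(1 + x_{n+1}²·g(x))). Then f₁(ℝ^{n+1} \ (Λ × {0})) = ℝ^{n+1} \ ((Λ ∩ {g ≥ 0}) × {0}). -/
/-!
Only the last coordinate moves, and on each vertical line `x = const` the map is the odd cubic
`t ↦ t (1 + c t²)` with `c = g(x)`. This cubic is onto `ℝ`, and its only zero is `t = 0` when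
`c ≥ 0`, while for `c < 0` it also vanishes at `t = (-c)^{-1/2} ≠ 0`. So removing `t = 0` above a
point of `Λ` removes the value `0` exactly when `g ≥ 0` there.
-/

open MvPolynomial Filter Function

namespace OddCubic

variable {c : ℝ}

lemma tendsto_atTop_atTop (hc : 0 ≤ c) :
    Tendsto (fun t : ℝ => t * (1 + t ^ 2 * c)) atTop atTop := by
  refine tendsto_atTop_mono' atTop ?_ tendsto_id
  filter_upwards [eventually_ge_atTop 0] with t ht
  have : 0 ≤ t * t ^ 2 * c := by positivity
  simp only [id]
  nlinarith

lemma tendsto_atBot_atBot (hc : 0 ≤ c) :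
    Tendsto (fun t : ℝ => t * (1 + t ^ 2 * c)) atBot atBot := by
  refine tendsto_atBot_mono' atBot ?_ tendsto_id
  filter_upwards [eventually_le_atBot 0] with t ht
  have : 0 ≤ -t * t ^ 2 * c := mul_nonneg (mul_nonneg (neg_nonneg.mpr ht) (sq_nonneg t)) hc
  simp only [id]
  nlinarith

/-- For `t ≥ 1 + 2 / (-c)` we have `c t² ≤ -2`, so the cubic is dominated by `-t`. -/
lemma tendsto_atTop_atBot (hc : c < 0) :
    Tendsto (fun t : ℝ => t * (1 + t ^ 2 * c)) atTop atBot := by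
  refine tendsto_atBot_mono' atTop ?_ tendsto_neg_atTop_atBot
  filter_upwards [eventually_ge_atTop (1 + 2 / -c)] with t ht
  have hpos : 0 < 2 / -c := div_pos two_pos (neg_pos.mpr hc)
  have hsq : 2 ≤ t ^ 2 * -c := by
    have : 2 ≤ t * -c := (div_le_iff₀ (neg_pos.mpr hc)).mp (by linarith)
    nlinarith
  show t * (1 + t ^ 2 * c) ≤ -t
  nlinarith

lemma tendsto_atBot_atTop (hc : c < 0) :
    Tendsto (fun t : ℝ => t * (1 + t ^ 2 * c)) atBot atTop := by
  have := (tendsto_atTop_atBot hc).comp tendsto_neg_atBot_atTop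
  refine tendsto_neg_atBot_atTop.comp this |>.congr fun t => ?_
  simp only [comp_apply]
  ring

lemma surjective (c : ℝ) : Surjective fun t : ℝ => t * (1 + t ^ 2 * c) := by
  have hcont : Continuous fun t : ℝ => t * (1 + t ^ 2 * c) := by fun_prop
  rcases le_or_gt 0 c with hc | hc
  · exact hcont.surjective (tendsto_atTop_atTop hc) (tendsto_atBot_atBot hc)
  · exact hcont.surjective' (tendsto_atBot_atTop hc) (tendsto_atTop_atBot hc)

lemma root_eq_zero (hc : 0 ≤ c) {t : ℝ} (h : t * (1 + t ^ 2 * c) = 0) : t = 0 := by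
  have : 0 < 1 + t ^ 2 * c := by positivity
  exact (mul_eq_zero.mp h).resolve_right this.ne'

lemma exists_ne_zero_root (hc : c < 0) : ∃ t : ℝ, t ≠ 0 ∧ t * (1 + t ^ 2 * c) = 0 := by
  have hpos : 0 < 1 / -c := one_div_pos.mpr (neg_pos.mpr hc)
  refine ⟨√(1 / -c), (Real.sqrt_pos.mpr hpos).ne', ?_⟩
  have : 1 / -c * c = -1 := by rw [div_mul_eq_mul_div, one_mul, div_neg, div_self hc.ne]
  rw [Real.sq_sqrt hpos.le, this, add_neg_cancel, mul_zero]

end OddCubic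

/-- f₁(x, x_{n+1}) = (x, x_{n+1}(1 + x_{n+1}²g(x))) maps ℝ^{n+1} \ (Λ×{0}) onto
ℝ^{n+1} \ ((Λ ∩ {g ≥ 0})×{0}). -/
theorem stmt_3 (n : ℕ) (Λ : Set (Fin n → ℝ)) (g : MvPolynomial (Fin n) ℝ) :
    (fun p : (Fin n → ℝ) × ℝ => (p.1, p.2 * (1 + p.2 ^ 2 * eval p.1 g))) ''
        ({p : (Fin n → ℝ) × ℝ | p.1 ∈ Λ ∧ p.2 = 0}ᶜ)
      = {p : (Fin n → ℝ) × ℝ | p.1 ∈ Λ ∧ 0 ≤ eval p.1 g ∧ p.2 = 0}ᶜ := by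
  ext ⟨x, y⟩
  simp only [Set.mem_image, Set.mem_compl_iff, Set.mem_ofPred_eq, Prod.exists, Prod.mk.injEq]
  constructor
  · rintro ⟨_, t, ht, rfl, rfl⟩ ⟨hΛ, hg, h0⟩
    exact ht ⟨hΛ, OddCubic.root_eq_zero hg h0⟩
  · intro hq
    by_cases hΛ0 : x ∈ Λ ∧ y = 0
    · obtain ⟨hΛ, rfl⟩ := hΛ0
      have hg : eval x g < 0 := not_le.mp fun hg => hq ⟨hΛ, hg, rfl⟩
      obtain ⟨t, ht, ht0⟩ := OddCubic.exists_ne_zero_root hg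
      exact ⟨x, t, fun h => ht h.2, rfl, ht0⟩
    · obtain ⟨t, rfl⟩ := OddCubic.surjective (eval x g) y
      refine ⟨x, t, fun ⟨hΛ, ht⟩ => hΛ0 ⟨hΛ, ?_⟩, rfl, rfl⟩
      simp [ht]
end

section
/- Let Λ ⊂ ℝⁿ be an arbitrary set and g ∈ ℝ[x₁,…,xₙ]. Define f₂ : ℝ^{n+1} → ℝ^{n+1} by f₂(x, x_{n+1}) = (x, x_{n+1}(1 + x_{n+1}²·g(x))(g(x)² + (x_{n+1}−1)²)). Then f₂(ℝ^{n+1} \ (Λ × {0})) = ℝ^{n+1} \ ((Λ ∩ {g > 0}) × {0}). -/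
/-!
Over each `x` the map acts on the last coordinate by `φ(t) = t (1 + t² c) (c² + (t - 1)²)` with
`c = g(x)`. This is surjective, since `|φ(t)| ≥ |t|` for large `|t|` with a sign depending only on
the sign of `c`. Deleting `t = 0` can only lose the value `0`, and `0` is still attained at some
`t ≠ 0` exactly when `c ≤ 0`: at `t = 1` if `c = 0` and at `t = (-c)^{-1/2}` if `c < 0`, while for
`c > 0` the other two factors never vanish.
-/

open MvPolynomial Filter Function

/-- The last coordinate of `f₂` over a point where `g` takes the value `c`. -/
def fiberMap (c t : ℝ) : ℝ := t * (1 + t ^ 2 * c) * (c ^ 2 + (t - 1) ^ 2)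

theorem surjective_mul_self_of_one_le {u : ℝ → ℝ} (hu : Continuous u) (R : ℝ)
    (h : ∀ t, R ≤ |t| → 1 ≤ u t) : Surjective fun t => t * u t := by
  refine (continuous_id.mul hu).surjective ?_ ?_
  · refine tendsto_atTop_mono' _ ?_ tendsto_id
    filter_upwards [eventually_ge_atTop (max R 0)] with t ht
    have ht0 : 0 ≤ t := le_of_max_le_right ht
    exact le_mul_of_one_le_right ht0 (h t (by rw [abs_of_nonneg ht0]; exact le_of_max_le_left ht))
  · refine tendsto_atBot_mono' _ ?_ tendsto_id
    filter_upwards [eventually_le_atBot (-max R 0)] with t ht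
    have ht0 : t ≤ 0 := by linarith [le_max_right R 0]
    exact mul_le_of_one_le_right ht0 (h t (by rw [abs_of_nonpos ht0]; linarith [le_max_left R 0]))

theorem one_le_sub_one_sq {t : ℝ} (ht : 2 ≤ |t|) : 1 ≤ (t - 1) ^ 2 := by
  cases abs_cases t <;> nlinarith

theorem fiberMap_surjective (c : ℝ) : Surjective (fiberMap c) := by
  have hu : Continuous fun t : ℝ => (1 + t ^ 2 * c) * (c ^ 2 + (t - 1) ^ 2) := by fun_prop
  rcases le_or_gt 0 c with hc | hc
  · convert surjective_mul_self_of_one_le hu 2 fun t ht => ?_ using 1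
    · ext t; simp only [fiberMap, mul_assoc]
    have h1 : 1 ≤ 1 + t ^ 2 * c := by nlinarith
    nlinarith [one_le_sub_one_sq ht, sq_nonneg c]
  · -- for `c < 0` the map reverses the ends of `ℝ`, so compare `-fiberMap c` with the identity
    have hu' : Continuous fun t : ℝ => -((1 + t ^ 2 * c) * (c ^ 2 + (t - 1) ^ 2)) := hu.neg
    have hneg := surjective_mul_self_of_one_le hu' (max 2 (2 / -c)) fun t ht => by
      have ht1 : 2 ≤ |t| := (le_max_left _ _).trans ht
      have ht2 : 2 / -c ≤ t ^ 2 := by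
        rw [← sq_abs]; nlinarith [(le_max_right 2 (2 / -c)).trans ht]
      have h1 : 2 ≤ t ^ 2 * -c := by rwa [div_le_iff₀ (neg_pos.2 hc)] at ht2
      nlinarith [one_le_sub_one_sq ht1, sq_nonneg c]
    convert neg_surjective.comp hneg using 1
    ext t; simp only [fiberMap, comp_apply]; ring

theorem fiberMap_ne_zero {c t : ℝ} (hc : 0 < c) (ht : t ≠ 0) : fiberMap c t ≠ 0 := by
  unfold fiberMap; positivity

theorem exists_ne_zero_fiberMap_eq_zero {c : ℝ} (hc : c ≤ 0) : ∃ t ≠ 0, fiberMap c t = 0 := by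
  rcases hc.lt_or_eq with hc | rfl
  · refine ⟨√(-c⁻¹), (Real.sqrt_pos.2 (by simpa using hc)).ne', ?_⟩
    rw [fiberMap, Real.sq_sqrt (by simpa using hc.le), neg_mul, inv_mul_cancel₀ hc.ne]
    ring
  · exact ⟨1, one_ne_zero, by norm_num [fiberMap]⟩

theorem image_fiberMap_compl {X : Type*} (c : X → ℝ) (Λ : Set X) :
    (fun p : X × ℝ => (p.1, fiberMap (c p.1) p.2)) '' {p | p.1 ∈ Λ ∧ p.2 = 0}ᶜ =
      {p | p.1 ∈ Λ ∧ 0 < c p.1 ∧ p.2 = 0}ᶜ := by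
  ext ⟨x, s⟩
  simp only [Set.mem_image, Set.mem_compl_iff, Set.mem_ofPred_eq, Prod.exists, Prod.mk.injEq]
  constructor
  · rintro ⟨_, t, ht, rfl, rfl⟩ ⟨hx, hc, h0⟩
    exact fiberMap_ne_zero hc (fun h => ht ⟨hx, h⟩) h0
  · intro h
    by_cases hxs : x ∈ Λ ∧ s = 0
    · obtain ⟨t, ht, h0⟩ :=
        exists_ne_zero_fiberMap_eq_zero (not_lt.1 fun hc => h ⟨hxs.1, hc, hxs.2⟩)
      exact ⟨x, t, fun h' => ht h'.2, rfl, h0.trans hxs.2.symm⟩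
    · obtain ⟨t, rfl⟩ := fiberMap_surjective (c x) s
      exact ⟨x, t, fun ⟨hx, ht⟩ => hxs ⟨hx, by simp [fiberMap, ht]⟩, rfl, rfl⟩

/-- f₂(x, x_{n+1}) = (x, x_{n+1}(1 + x_{n+1}²g(x))(g(x)² + (x_{n+1}−1)²)) maps
ℝ^{n+1} \ (Λ×{0}) onto ℝ^{n+1} \ ((Λ ∩ {g > 0})×{0}). -/
theorem stmt_4 (n : ℕ) (Λ : Set (Fin n → ℝ)) (g : MvPolynomial (Fin n) ℝ) :
    (fun p : (Fin n → ℝ) × ℝ =>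
        (p.1, p.2 * (1 + p.2 ^ 2 * eval p.1 g) * ((eval p.1 g) ^ 2 + (p.2 - 1) ^ 2))) ''
        ({p : (Fin n → ℝ) × ℝ | p.1 ∈ Λ ∧ p.2 = 0}ᶜ)
      = {p : (Fin n → ℝ) × ℝ | p.1 ∈ Λ ∧ 0 < eval p.1 g ∧ p.2 = 0}ᶜ :=
  image_fiberMap_compl (fun x => eval x g) Λ
end

section
/- Let S ⊊ ℝⁿ be a proper basic semialgebraic set, i.e., S = {x ∈ ℝⁿ : g₁(x) *₁ 0, …, g_r(x) *_r 0} where each g_i is a polynomial and each *_i is either > or ≥. Then ℝ^{n+1} \ (S × {0}) is the image of a polynomial map ℝ^{n+1} → ℝ^{n+1}. -/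
/-!
Pick `x₀ ∉ S`. The shear `(x, t) ↦ (x₀ + t x, t)` maps `ℝⁿ⁺¹` onto the complement of
`({x₀}ᶜ) × {0}`. For a constraint `g(x) * 0`, the map `(x, t) ↦ (x, t (q(t) + g(x)))` with
`q(t) = t²` for `≥` and `q(t) = (t² - 1)²` for `>` is onto on every fibre `{x} × ℝ`, and it
sends `t ≠ 0` to a nonzero value exactly when `g(x) * 0` holds; otherwise it has a nonzero
root. Hence it turns the complement of `T × {0}` into the complement of `(T ∩ {g * 0}) × {0}`.
Composing the shear with these maps for all constraints gives the complement of
`({x₀}ᶜ ∩ S) × {0} = S × {0}`.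
-/

open MvPolynomial

namespace SemialgebraicComplement

open Filter Set

def SignCond (b : Bool) (G : ℝ) : Prop := if b then 0 < G else 0 ≤ G

noncomputable def signGadget (b : Bool) (G t : ℝ) : ℝ :=
  if b then t * ((t ^ 2 - 1) ^ 2 + G) else t * (t ^ 2 + G)

lemma signGadget_zero (b : Bool) (G : ℝ) : signGadget b G 0 = 0 := by
  cases b <;> simp [signGadget]

lemma continuous_signGadget (b : Bool) (G : ℝ) : Continuous (signGadget b G) := by
  cases b <;> unfold signGadget <;> simp only [Bool.false_eq_true, if_true, if_false] <;> fun_prop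

lemma signGadget_neg (b : Bool) (G t : ℝ) : signGadget b G (-t) = -signGadget b G t := by
  cases b <;> simp only [signGadget, Bool.false_eq_true, if_true, if_false] <;> ring

lemma tendsto_signGadget_atTop (b : Bool) (G : ℝ) : Tendsto (signGadget b G) atTop atTop := by
  have hsq : Tendsto (fun t : ℝ => t ^ 2) atTop atTop := tendsto_pow_atTop two_ne_zero
  cases b <;> unfold signGadget <;> simp only [Bool.false_eq_true, if_true, if_false]
  · exact tendsto_id.atTop_mul_atTop₀ (tendsto_atTop_add_const_right _ G hsq)
  · have h : Tendsto (fun t : ℝ => (t ^ 2 - 1) ^ 2) atTop atTop :=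
      (tendsto_pow_atTop two_ne_zero).comp (tendsto_atTop_add_const_right _ (-1) hsq)
    exact tendsto_id.atTop_mul_atTop₀ (tendsto_atTop_add_const_right _ G h)

lemma surjective_signGadget (b : Bool) (G : ℝ) : Function.Surjective (signGadget b G) := by
  refine (continuous_signGadget b G).surjective (tendsto_signGadget_atTop b G) ?_
  have h := tendsto_neg_atTop_atBot.comp
    ((tendsto_signGadget_atTop b G).comp tendsto_neg_atBot_atTop)
  exact h.congr fun t => by simp [signGadget_neg]

lemma signGadget_ne_zero {b : Bool} {G : ℝ} (h : SignCond b G) {t : ℝ} (ht : t ≠ 0) :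
    signGadget b G t ≠ 0 := by
  cases b <;> simp only [SignCond, signGadget, Bool.false_eq_true, if_true, if_false] at h ⊢
  · exact mul_ne_zero ht (by positivity)
  · exact mul_ne_zero ht (by positivity)

lemma exists_signGadget_eq_zero {b : Bool} {G : ℝ} (h : ¬SignCond b G) :
    ∃ t ≠ 0, signGadget b G t = 0 := by
  cases b <;> simp only [SignCond, signGadget, Bool.false_eq_true, if_true, if_false, not_le,
    not_lt] at h ⊢
  · refine ⟨√(-G), (Real.sqrt_pos.mpr (by linarith)).ne', ?_⟩
    rw [Real.sq_sqrt (by linarith)]; ring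
  · have hroot := Real.sqrt_nonneg (-G)
    refine ⟨√(1 + √(-G)), (Real.sqrt_pos.mpr (by linarith)).ne', ?_⟩
    rw [Real.sq_sqrt (by linarith), add_sub_cancel_left, Real.sq_sqrt (by linarith)]; ring

lemma exists_ne_zero_signGadget_eq_iff (b : Bool) (G s : ℝ) :
    (∃ t ≠ 0, signGadget b G t = s) ↔ s ≠ 0 ∨ ¬SignCond b G := by
  constructor
  · rintro ⟨t, ht, rfl⟩
    exact (em (SignCond b G)).imp (signGadget_ne_zero · ht) id
  · intro h
    by_cases hs : s = 0
    · subst hs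
      exact exists_signGadget_eq_zero (h.resolve_left (not_not.mpr rfl))
    · obtain ⟨t, rfl⟩ := surjective_signGadget b G s
      exact ⟨t, fun ht => hs (by rw [ht, signGadget_zero]), rfl⟩

variable {n : ℕ}

def complProdZero (S : Set (Fin n → ℝ)) : Set (Fin (n + 1) → ℝ) :=
  {y | Fin.init y ∈ S ∧ y (Fin.last n) = 0}ᶜ

def fiberwiseMap (φ : (Fin n → ℝ) → ℝ → ℝ) (y : Fin (n + 1) → ℝ) : Fin (n + 1) → ℝ :=
  Fin.snoc (Fin.init y) (φ (Fin.init y) (y (Fin.last n)))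

lemma snoc_init_eq_iff {α : Type*} {x : Fin n → α} {t : α} {y : Fin (n + 1) → α} :
    Fin.snoc x t = y ↔ x = Fin.init y ∧ t = y (Fin.last n) := by
  rw [← Fin.snoc_init_self y, Fin.snoc_inj, Fin.snoc_init_self]

lemma mem_image_fiberwiseMap {φ : (Fin n → ℝ) → ℝ → ℝ} {T : Set (Fin (n + 1) → ℝ)}
    {y : Fin (n + 1) → ℝ} :
    y ∈ fiberwiseMap φ '' T ↔
      ∃ t, Fin.snoc (Fin.init y) t ∈ T ∧ φ (Fin.init y) t = y (Fin.last n) := by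
  constructor
  · rintro ⟨w, hw, rfl⟩
    refine ⟨w (Fin.last n), ?_, by simp [fiberwiseMap]⟩
    rwa [fiberwiseMap, Fin.init_snoc, Fin.snoc_init_self]
  · rintro ⟨t, ht, hφ⟩
    refine ⟨_, ht, ?_⟩
    rw [fiberwiseMap, Fin.init_snoc, Fin.snoc_last, hφ, Fin.snoc_init_self]

lemma image_fiberwiseMap_complProdZero {φ : (Fin n → ℝ) → ℝ → ℝ} {C : Set (Fin n → ℝ)}
    (hφ₀ : ∀ x, φ x 0 = 0) (hφ : ∀ x s, (∃ t ≠ 0, φ x t = s) ↔ s ≠ 0 ∨ x ∉ C)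
    (S : Set (Fin n → ℝ)) :
    fiberwiseMap φ '' complProdZero S = complProdZero (S ∩ C) := by
  ext y
  simp only [mem_image_fiberwiseMap, complProdZero, mem_compl_iff, mem_ofPred_eq, Fin.init_snoc,
    Fin.snoc_last, mem_inter_iff]
  by_cases hy : Fin.init y ∈ S
  · simp only [hy, true_and, ← ne_eq, hφ, not_and_or, or_comm]
  · simp only [hy, false_and, not_false_eq_true, true_and, iff_true]
    by_cases hs : y (Fin.last n) = 0
    · exact ⟨0, by rw [hφ₀, hs]⟩
    · exact ((hφ _ _).mpr (Or.inl hs)).imp fun _ => And.right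

def shear (x₀ : Fin n → ℝ) (y : Fin (n + 1) → ℝ) : Fin (n + 1) → ℝ :=
  Fin.snoc (fun i => x₀ i + y (Fin.last n) * y i.castSucc) (y (Fin.last n))

lemma range_shear (x₀ : Fin n → ℝ) : range (shear x₀) = complProdZero {x₀}ᶜ := by
  ext y
  simp only [mem_range, shear, snoc_init_eq_iff, complProdZero, mem_compl_iff, mem_ofPred_eq,
    mem_singleton_iff, not_and_or, not_not, ← ne_eq]
  by_cases h0 : y (Fin.last n) = 0
  · simp only [h0, ne_eq, not_true_eq_false, or_false]
    constructor
    · rintro ⟨w, hx, ht⟩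
      rw [← hx, ht]
      simp
    · rintro rfl
      exact ⟨0, by simp, rfl⟩
  · refine iff_of_true ?_ (Or.inr h0)
    refine ⟨Fin.snoc (fun i => (y i.castSucc - x₀ i) / y (Fin.last n)) (y (Fin.last n)), ?_,
      by simp⟩
    funext i
    simp only [Fin.snoc_last, Fin.snoc_castSucc, Fin.init]
    field_simp
    ring

def IsPolynomialMap {m k : ℕ} (F : (Fin m → ℝ) → Fin k → ℝ) : Prop :=
  ∃ f : Fin k → MvPolynomial (Fin m) ℝ, F = fun x i => eval x (f i)

def IsPolynomialImage {k : ℕ} (T : Set (Fin k → ℝ)) : Prop :=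
  ∃ f : Fin k → MvPolynomial (Fin k) ℝ, range (fun x i => eval x (f i)) = T

lemma IsPolynomialMap.isPolynomialImage_range {k : ℕ} {F : (Fin k → ℝ) → Fin k → ℝ}
    (hF : IsPolynomialMap F) : IsPolynomialImage (range F) := by
  obtain ⟨f, rfl⟩ := hF
  exact ⟨f, rfl⟩

lemma IsPolynomialImage.image {k : ℕ} {T : Set (Fin k → ℝ)} (hT : IsPolynomialImage T)
    {F : (Fin k → ℝ) → Fin k → ℝ} (hF : IsPolynomialMap F) : IsPolynomialImage (F '' T) := by
  obtain ⟨f, rfl⟩ := hT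
  obtain ⟨p, rfl⟩ := hF
  refine ⟨fun i => bind₁ f (p i), ?_⟩
  rw [← range_comp]
  congr 1
  funext x i
  exact eval₂Hom_bind₁ (RingHom.id ℝ) x f (p i)

lemma isPolynomialMap_shear (x₀ : Fin n → ℝ) : IsPolynomialMap (shear x₀) := by
  refine ⟨Fin.snoc (fun i => C (x₀ i) + X (Fin.last n) * X i.castSucc) (X (Fin.last n)), ?_⟩
  funext y i
  induction i using Fin.lastCases <;> simp [shear]

lemma isPolynomialMap_fiberwiseMap_signGadget (b : Bool) (p : MvPolynomial (Fin n) ℝ) :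
    IsPolynomialMap (fiberwiseMap fun x => signGadget b (eval x p)) := by
  let t : MvPolynomial (Fin (n + 1)) ℝ := X (Fin.last n)
  refine ⟨Fin.snoc (fun i => X i.castSucc)
    (t * ((if b then (t ^ 2 - 1) ^ 2 else t ^ 2) + rename Fin.castSucc p)), ?_⟩
  funext y i
  have hinit : Fin.init y = y ∘ Fin.castSucc := rfl
  induction i using Fin.lastCases with
  | last => cases b <;> simp [t, fiberwiseMap, signGadget, eval_rename, hinit]
  | cast i => simp [fiberwiseMap, Fin.init]

lemma IsPolynomialImage.complProdZero_inter_signCond {S : Set (Fin n → ℝ)}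
    (hS : IsPolynomialImage (complProdZero S)) (b : Bool) (p : MvPolynomial (Fin n) ℝ) :
    IsPolynomialImage (complProdZero (S ∩ {x | SignCond b (eval x p)})) := by
  rw [← image_fiberwiseMap_complProdZero (C := {x | SignCond b (eval x p)})
    (fun x => signGadget_zero b (eval x p))
    (fun x => exists_ne_zero_signGadget_eq_iff b (eval x p))]
  exact hS.image (isPolynomialMap_fiberwiseMap_signGadget b p)

lemma IsPolynomialImage.complProdZero_inter_forall_signCond {S : Set (Fin n → ℝ)}
    (hS : IsPolynomialImage (complProdZero S)) {ι : Type*} (b : ι → Bool)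
    (p : ι → MvPolynomial (Fin n) ℝ) (s : Finset ι) :
    IsPolynomialImage (complProdZero (S ∩ {x | ∀ i ∈ s, SignCond (b i) (eval x (p i))})) := by
  classical
  induction s using Finset.induction_on with
  | empty => simpa using hS
  | insert j s _ ih =>
    convert ih.complProdZero_inter_signCond (b j) (p j) using 2
    ext x
    simp only [mem_inter_iff, mem_ofPred_eq, Finset.forall_mem_insert]
    tauto

end SemialgebraicComplement

open SemialgebraicComplement in
/-- If S ⊊ ℝⁿ is a proper basic semialgebraic set then ℝ^{n+1} \ (S×{0}) is a
polynomial image of ℝ^{n+1}. -/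
theorem stmt_5 (n r : ℕ) (g : Fin r → MvPolynomial (Fin n) ℝ) (strict : Fin r → Bool)
    (S : Set (Fin n → ℝ))
    (hS : S = {x | ∀ i, if strict i then 0 < eval x (g i) else 0 ≤ eval x (g i)})
    (hproper : S ≠ Set.univ) :
    ∃ f : Fin (n + 1) → MvPolynomial (Fin (n + 1)) ℝ,
      Set.range (fun x i => eval x (f i)) =
        {y : Fin (n + 1) → ℝ |
          (fun i : Fin n => y i.castSucc) ∈ S ∧ y (Fin.last n) = 0}ᶜ := by
  obtain ⟨x₀, hx₀⟩ := (Set.ne_univ_iff_exists_notMem S).mp hproper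
  have hS' : {x₀}ᶜ ∩ {x | ∀ i ∈ Finset.univ, SignCond (strict i) (eval x (g i))} = S := by
    rw [hS] at hx₀ ⊢
    simp only [Finset.mem_univ, true_implies]
    exact Set.inter_eq_right.mpr fun x hx => ne_of_mem_of_not_mem hx hx₀
  have hshear : IsPolynomialImage (complProdZero {x₀}ᶜ) :=
    range_shear x₀ ▸ (isPolynomialMap_shear x₀).isPolynomialImage_range
  rw [← hS']
  exact hshear.complProdZero_inter_forall_signCond strict g Finset.univ
end

section
/- Let f, ε : ℝⁿ → ℝ be differentiable functions with no common zero, and set g := xₙ · f²/(f² + ε²). Suppose that for each x ∈ ℝⁿ with xₙ ≤ 0 one has |f(x)| ≥ 1, |xₙ|·|∂f/∂xₙ(x)|·ε(x)² < 1/16, |xₙ·ε(x)| < 1/8, |ε(x)| < 1/2 and |∂ε/∂xₙ(x)| < 1/4. Then ∂g/∂xₙ(x) > 1/2 for every x with xₙ ≤ 0, and ∂g/∂xₙ(x) = 1 at every point x where ε(x) = 0. -/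
/-!
By the quotient rule,
`∂g/∂xₙ = (f²(f² + ε²) + 2xₙ f ε² ∂f/∂xₙ - 2xₙ f² ε ∂ε/∂xₙ) / (f² + ε²)²`.
On `{xₙ ≤ 0}` the hypotheses make each of the two correction terms smaller than a fixed
fraction of `f²`, and since `f² ≥ 1 > 4ε²` the main term `f²(f² + ε²)` exceeds half of the
denominator by more than that. Where `ε = 0` the quotient is `f⁴ / f⁴ = 1`.
-/

theorem fderiv_mul_sq_div_sq_add_sq_apply {E : Type*} [NormedAddCommGroup E] [NormedSpace ℝ E]
    {u f ε : E → ℝ} {x : E} (hu : DifferentiableAt ℝ u x) (hf : DifferentiableAt ℝ f x)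
    (hε : DifferentiableAt ℝ ε x) (hx : f x ^ 2 + ε x ^ 2 ≠ 0) (v : E) :
    fderiv ℝ (fun y => u y * f y ^ 2 / (f y ^ 2 + ε y ^ 2)) x v =
      (fderiv ℝ u x v * f x ^ 2 * (f x ^ 2 + ε x ^ 2)
        + 2 * u x * f x * ε x ^ 2 * fderiv ℝ f x v
        - 2 * u x * f x ^ 2 * ε x * fderiv ℝ ε x v) / (f x ^ 2 + ε x ^ 2) ^ 2 := by
  have hden := (hf.hasFDerivAt.pow 2).fun_add (hε.hasFDerivAt.pow 2)
  have hg : HasFDerivAt (fun y => u y * f y ^ 2 * (f y ^ 2 + ε y ^ 2)⁻¹) _ x :=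
    (hu.hasFDerivAt.fun_mul (hf.hasFDerivAt.pow 2)).fun_mul ((hasFDerivAt_inv hx).comp x hden)
  simp only [div_eq_mul_inv, hg.fderiv]
  simp only [Nat.add_one_sub_one, pow_one, nsmul_eq_mul, Nat.cast_ofNat,
    ContinuousLinearMap.comp_add, ContinuousLinearMap.comp_smulₛₗ, Real.ringHom_apply, smul_add,
    add_apply, smul_apply, ContinuousLinearMap.comp_apply,
    ContinuousLinearMap.toSpanSingleton_apply, smul_eq_mul, mul_neg]
  field_simp
  ring

theorem half_lt_div_sq_of_abs_lt {s c p : ℝ} (hs : 1 ≤ s) (hc₀ : 0 ≤ c) (hc : c < 1 / 4)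
    (hp : |p| < 3 * s / 16) : 1 / 2 < (s * (s + c) + p) / (s + c) ^ 2 := by
  rw [lt_div_iff₀ (by positivity)]
  nlinarith [neg_abs_le p]

theorem half_lt_quotient_of_bounds {t a b A B : ℝ} (ha : 1 ≤ |a|)
    (htA : |t| * |A| * b ^ 2 < 1 / 16) (htb : |t * b| < 1 / 8)
    (hb : |b| < 1 / 2) (hB : |B| < 1 / 4) :
    1 / 2 < (1 * a ^ 2 * (a ^ 2 + b ^ 2) + 2 * t * a * b ^ 2 * A
      - 2 * t * a ^ 2 * b * B) / (a ^ 2 + b ^ 2) ^ 2 := by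
  have ha2 : 1 ≤ a ^ 2 := by nlinarith [sq_abs a]
  have ha_le : |a| ≤ a ^ 2 := by nlinarith [sq_abs a]
  have hA_term : |2 * t * a * b ^ 2 * A| < a ^ 2 / 8 :=
    calc |2 * t * a * b ^ 2 * A| = 2 * |a| * (|t| * |A| * b ^ 2) := by
          simp only [abs_mul, abs_two, abs_pow, sq_abs]; ring
      _ < 2 * |a| * (1 / 16) := by gcongr
      _ ≤ a ^ 2 / 8 := by linarith
  have hB_term : |2 * t * a ^ 2 * b * B| < a ^ 2 / 16 :=
    calc |2 * t * a ^ 2 * b * B| = 2 * a ^ 2 * (|t * b| * |B|) := by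
          simp only [abs_mul, abs_two, abs_pow, sq_abs]; ring
      _ < 2 * a ^ 2 * (1 / 8 * (1 / 4)) :=
          mul_lt_mul_of_pos_left (mul_lt_mul'' htb hB (abs_nonneg _) (abs_nonneg _)) (by linarith)
      _ = a ^ 2 / 16 := by ring
  have hb2 : b ^ 2 < 1 / 4 := by nlinarith [sq_abs b, abs_nonneg b]
  rw [one_mul, add_sub_assoc]
  refine half_lt_div_sq_of_abs_lt ha2 (sq_nonneg b) hb2 ?_
  calc _ ≤ |2 * t * a * b ^ 2 * A| + |2 * t * a ^ 2 * b * B| := abs_sub _ _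
    _ < 3 * a ^ 2 / 16 := by linarith

/-- Derivative bounds for g := xₙ f²/(f²+ε²) under the stated estimates on
{xₙ ≤ 0}. -/
theorem stmt_8 (n : ℕ) (f ε : (Fin (n + 1) → ℝ) → ℝ)
    (hf : Differentiable ℝ f) (hε : Differentiable ℝ ε)
    (hnz : ∀ x, f x ≠ 0 ∨ ε x ≠ 0)
    (g : (Fin (n + 1) → ℝ) → ℝ)
    (hg : g = fun x => x (Fin.last n) * (f x) ^ 2 / ((f x) ^ 2 + (ε x) ^ 2))
    (h1 : ∀ x, x (Fin.last n) ≤ 0 → 1 ≤ |f x|)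
    (h2 : ∀ x, x (Fin.last n) ≤ 0 →
      |x (Fin.last n)| * |fderiv ℝ f x (Pi.single (Fin.last n) 1)| * (ε x) ^ 2 < 1 / 16)
    (h3 : ∀ x, x (Fin.last n) ≤ 0 → |x (Fin.last n) * ε x| < 1 / 8)
    (h4 : ∀ x, x (Fin.last n) ≤ 0 → |ε x| < 1 / 2)
    (h5 : ∀ x, x (Fin.last n) ≤ 0 →
      |fderiv ℝ ε x (Pi.single (Fin.last n) 1)| < 1 / 4) :
    (∀ x, x (Fin.last n) ≤ 0 →
      1 / 2 < fderiv ℝ g x (Pi.single (Fin.last n) 1)) ∧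
    (∀ x, ε x = 0 → fderiv ℝ g x (Pi.single (Fin.last n) 1) = 1) := by
  subst hg
  have hden (x) : f x ^ 2 + ε x ^ 2 ≠ 0 := by rcases hnz x with h | h <;> positivity
  have hpartial (x : Fin (n + 1) → ℝ) :
      fderiv ℝ (fun y => y (Fin.last n) * f y ^ 2 / (f y ^ 2 + ε y ^ 2)) x
          (Pi.single (Fin.last n) 1) =
        (1 * f x ^ 2 * (f x ^ 2 + ε x ^ 2)
          + 2 * x (Fin.last n) * f x * ε x ^ 2 * fderiv ℝ f x (Pi.single (Fin.last n) 1)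
          - 2 * x (Fin.last n) * f x ^ 2 * ε x * fderiv ℝ ε x (Pi.single (Fin.last n) 1))
          / (f x ^ 2 + ε x ^ 2) ^ 2 := by
    rw [fderiv_mul_sq_div_sq_add_sq_apply (differentiableAt_apply _ x) (hf x) (hε x) (hden x),
      (hasFDerivAt_apply (Fin.last n) x).fderiv, ContinuousLinearMap.proj_apply,
      Pi.single_eq_same]
  refine ⟨fun x hx => ?_, fun x hx => ?_⟩
  · rw [hpartial]
    exact half_lt_quotient_of_bounds (h1 x hx) (h2 x hx) (h3 x hx) (h4 x hx) (h5 x hx)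
  · have hfx : f x ≠ 0 := (hnz x).resolve_right (not_not.2 hx)
    rw [hpartial, hx]
    field_simp
    ring
end

section
/- Let P ∈ ℝ[x₁,…,xₙ] be a nonzero polynomial whose total degree equals its degree in the variable xₙ, and let K ⊂ ℝⁿ be a compact set. Then there exists M_K > 0 such that for every M ≥ M_K the partial derivative with respect to xₙ of the function β_{P,M}(x) := xₙ(1 − x_{n−1}·P(x)²/M) is strictly positive on K ∩ {x_{n−1} ≤ 0}. -/
open MvPolynomial

/-! With `g(y) = y_{n-1} P(y)²`, the derivative of `xₙ (1 - g/M)` in the direction `eₙ` is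
`1 - g(x)/M - xₙ ∂ₙg(x)/M`. On `{x_{n-1} ≤ 0}` the middle term is nonnegative, and since `g` is
`C¹`, `xₙ ∂ₙg` is bounded on the compact set `K`, so the last term is below `1` once `M` is large. -/

section

variable {E : Type*} [NormedAddCommGroup E] [NormedSpace ℝ E]

theorem fderiv_clm_mul_one_sub_div_apply (ℓ : E →L[ℝ] ℝ) {g : E → ℝ} {x : E}
    (hg : DifferentiableAt ℝ g x) (M : ℝ) (v : E) :
    fderiv ℝ (fun y => ℓ y * (1 - g y / M)) x v
      = ℓ v * (1 - g x / M) - ℓ x * fderiv ℝ g x v / M := by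
  simp only [div_eq_mul_inv]
  rw [(ℓ.hasFDerivAt.fun_mul ((hg.hasFDerivAt.mul_const M⁻¹).const_sub 1)).fderiv]
  simp only [add_apply, smul_apply, neg_apply, smul_eq_mul]
  ring

theorem exists_forall_ge_fderiv_clm_mul_one_sub_div_pos {ℓ : E →L[ℝ] ℝ} {v : E}
    (hℓv : ℓ v = 1) {g : E → ℝ} (hg : ContDiff ℝ 1 g) {K : Set E} (hK : IsCompact K) :
    ∃ MK > (0 : ℝ), ∀ M : ℝ, MK ≤ M → ∀ x ∈ K, g x ≤ 0 →
      0 < fderiv ℝ (fun y => ℓ y * (1 - g y / M)) x v := by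
  have hcont : Continuous fun x => ℓ x * fderiv ℝ g x v :=
    ℓ.continuous.mul ((hg.continuous_fderiv one_ne_zero).clm_apply continuous_const)
  obtain ⟨C, hC⟩ := hK.exists_bound_of_continuousOn hcont.continuousOn
  refine ⟨|C| + 1, by positivity, fun M hM x hx hgx => ?_⟩
  have hM : 0 < M := by linarith [abs_nonneg C]
  rw [fderiv_clm_mul_one_sub_div_apply ℓ (hg.differentiable one_ne_zero x), hℓv]
  have hbound : ℓ x * fderiv ℝ g x v ≤ |C| :=
    (le_abs_self _).trans ((hC x hx).trans (le_abs_self C))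
  have : g x / M ≤ 0 := div_nonpos_of_nonpos_of_nonneg hgx hM.le
  have : ℓ x * fderiv ℝ g x v / M < 1 := by
    rw [div_lt_one hM]; linarith
  linarith

end

/-- For β_{P,M}(x) := xₙ(1 − x_{n−1}P(x)²/M) and a compact K there is M_K > 0 such
that for M ≥ M_K the partial derivative ∂β/∂xₙ is strictly positive on
K ∩ {x_{n−1} ≤ 0}. Coordinates in ℝ^{n+2}: x_{n−1} is index n (penultimate), xₙ is the last. -/
theorem stmt_9 (n : ℕ) (P : MvPolynomial (Fin (n + 2)) ℝ)
    (K : Set (Fin (n + 2) → ℝ)) (hK : IsCompact K) :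
    ∃ MK > (0 : ℝ), ∀ M : ℝ, MK ≤ M → ∀ x ∈ K, x ⟨n, by omega⟩ ≤ 0 →
      0 < fderiv ℝ
        (fun y : Fin (n + 2) → ℝ =>
          y (Fin.last (n + 1)) * (1 - y ⟨n, by omega⟩ * (eval y P) ^ 2 / M))
        x (Pi.single (Fin.last (n + 1)) 1) := by
  have hg : ContDiff ℝ 1 fun y : Fin (n + 2) → ℝ => y ⟨n, by omega⟩ * eval y P ^ 2 :=
    (contDiff_apply ℝ ℝ _).mul ((AnalyticOnNhd.eval_mvPolynomial P).contDiff.pow 2)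
  obtain ⟨MK, hMK, hβ⟩ := exists_forall_ge_fderiv_clm_mul_one_sub_div_pos
    (ℓ := ContinuousLinearMap.proj (Fin.last (n + 1)))
    (v := Pi.single (Fin.last (n + 1)) 1) (by simp) hg hK
  exact ⟨MK, hMK, fun M hM x hx hxn => hβ M hM x hx
    (mul_nonpos_of_nonpos_of_nonneg hxn (sq_nonneg _))⟩
end

section
/- Let P ∈ ℝ[x₁,…,xₙ] be a nonzero polynomial with deg(P) = deg_{xₙ}(P), and let K ⊂ ℝⁿ be a compact set. Then there exists M_K > 0 such that for every M ≥ M_K, the polynomial γ(x) := xₙ(1 − xₙ·P(x)²/M)² has ∂γ/∂xₙ strictly positive on K ∩ {xₙ ≤ 0}; moreover, for every M > 0, ∂γ/∂xₙ equals 1 at every point of the set {x : xₙ·P(x) = 0}. -/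
/-!
The map γ is itself a polynomial, so with A = 1 - xₙP²/M one computes
∂γ/∂xₙ = A² - 2xₙA(P² + 2xₙP·∂ₙP)/M. For xₙ ≤ 0 we have A ≥ 1 and the P²-term is nonnegative,
hence ∂γ/∂xₙ ≥ A(A - 4xₙ²|P·∂ₙP|/M) > 0 once M exceeds the maximum of 4xₙ²|P·∂ₙP| on K.
Where xₙP = 0 we have A = 1 and the correction term vanishes.
-/

open MvPolynomial

namespace MvPolynomial

variable {σ : Type*} [Fintype σ]

theorem hasFDerivAt_eval (p : MvPolynomial σ ℝ) (x : σ → ℝ) :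
    HasFDerivAt (fun y => eval y p)
      (∑ i, eval x (pderiv i p) • (ContinuousLinearMap.proj i : (σ → ℝ) →L[ℝ] ℝ)) x := by
  classical
  induction p using MvPolynomial.induction_on with
  | C a =>
    simp only [eval_C, pderiv_C, map_zero, zero_smul, Finset.sum_const_zero]
    exact hasFDerivAt_const a x
  | add p q hp hq =>
    simp only [map_add, add_smul, Finset.sum_add_distrib]
    exact hp.add hq
  | mul_X p i hp =>
    simp only [eval_mul, eval_X]
    refine (hp.mul (hasFDerivAt_apply i x)).congr_fderiv ?_
    ext v
    simp [pderiv_X, Pi.single_apply, add_mul, Finset.sum_add_distrib, Finset.mul_sum, apply_ite,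
      mul_assoc]

theorem fderiv_eval_apply_single [DecidableEq σ] (p : MvPolynomial σ ℝ) (x : σ → ℝ) (i : σ) :
    fderiv ℝ (fun y => eval y p) x (Pi.single i 1) = eval x (pderiv i p) := by
  simp [(hasFDerivAt_eval p x).fderiv, Pi.single_apply]

end MvPolynomial

/-- `∂γ/∂xₙ` at a point where `xₙ = t`, `P = a` and `∂P/∂xₙ = b`. -/
noncomputable def gammaPartial (M t a b : ℝ) : ℝ :=
  (1 - t * a ^ 2 / M) ^ 2 - 2 * t * (1 - t * a ^ 2 / M) * (a ^ 2 + 2 * t * a * b) / M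

theorem fderiv_gamma_apply_single {σ : Type*} [Fintype σ] [DecidableEq σ]
    (p : MvPolynomial σ ℝ) (i : σ) (M : ℝ) (x : σ → ℝ) :
    fderiv ℝ (fun y : σ → ℝ => y i * (1 - y i * eval y p ^ 2 / M) ^ 2) x (Pi.single i 1) =
      gammaPartial M (x i) (eval x p) (eval x (pderiv i p)) := by
  have hpoly : (fun y : σ → ℝ => y i * (1 - y i * eval y p ^ 2 / M) ^ 2) =
      fun y => eval y (X i * (1 - X i * p ^ 2 * C M⁻¹) ^ 2) := by
    funext y
    simp [div_eq_mul_inv]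
  rw [hpoly, fderiv_eval_apply_single]
  simp [gammaPartial, div_eq_mul_inv]
  ring

theorem gammaPartial_pos {M t a b : ℝ} (hM : 0 < M) (ht : t ≤ 0) (hMt : 4 * t ^ 2 * |a * b| < M) :
    0 < gammaPartial M t a b := by
  set A := 1 - t * a ^ 2 / M with hA_def
  have hA : 1 ≤ A := by
    have : t * a ^ 2 / M ≤ 0 :=
      div_nonpos_of_nonpos_of_nonneg (mul_nonpos_of_nonpos_of_nonneg ht (sq_nonneg a)) hM.le
    linarith
  have hquad : 0 ≤ -2 * t * a ^ 2 / M := by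
    apply div_nonneg _ hM.le
    nlinarith [sq_nonneg a]
  have hcross : 4 * t ^ 2 * (a * b) / M < 1 := by
    rw [div_lt_one hM]
    nlinarith [le_abs_self (a * b), sq_nonneg t]
  have hsplit : gammaPartial M t a b = A * (A + -2 * t * a ^ 2 / M - 4 * t ^ 2 * (a * b) / M) := by
    simp only [gammaPartial, hA_def]
    ring
  rw [hsplit]
  exact mul_pos (by linarith) (by linarith)

theorem gammaPartial_of_mul_eq_zero {M t a : ℝ} (h : t * a = 0) (b : ℝ) :
    gammaPartial M t a b = 1 := by
  rcases mul_eq_zero.mp h with rfl | rfl <;> simp [gammaPartial]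

theorem stmt_11_general (n : ℕ) (P : MvPolynomial (Fin (n + 1)) ℝ)
    (K : Set (Fin (n + 1) → ℝ)) (hK : IsCompact K) :
    (∃ MK > (0 : ℝ), ∀ M : ℝ, MK ≤ M → ∀ x ∈ K, x (Fin.last n) ≤ 0 →
      0 < fderiv ℝ
        (fun y : Fin (n + 1) → ℝ =>
          y (Fin.last n) * (1 - y (Fin.last n) * (eval y P) ^ 2 / M) ^ 2)
        x (Pi.single (Fin.last n) 1)) ∧
    (∀ M : ℝ, 0 < M → ∀ x : Fin (n + 1) → ℝ, x (Fin.last n) * eval x P = 0 →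
      fderiv ℝ
        (fun y : Fin (n + 1) → ℝ =>
          y (Fin.last n) * (1 - y (Fin.last n) * (eval y P) ^ 2 / M) ^ 2)
        x (Pi.single (Fin.last n) 1) = 1) := by
  set l := Fin.last n
  refine ⟨?_, fun M _ x hx => by
    rw [fderiv_gamma_apply_single, gammaPartial_of_mul_eq_zero hx]⟩
  obtain ⟨B, hB⟩ : BddAbove
      ((fun x : Fin (n + 1) → ℝ => 4 * x l ^ 2 * |eval x P * eval x (pderiv l P)|) '' K) := by
    have hP := P.continuous_eval
    have hdP := (pderiv l P).continuous_eval
    exact hK.bddAbove_image (by fun_prop)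
  refine ⟨max B 0 + 1, by positivity, fun M hM x hx hxl => ?_⟩
  rw [fderiv_gamma_apply_single]
  have hxB := hB (Set.mem_image_of_mem _ hx)
  exact gammaPartial_pos (by linarith [le_max_right B 0]) hxl (by linarith [le_max_left B 0])

/-- For γ(x) := xₙ(1 − xₙP(x)²/M)² and K compact there is M_K > 0 such that for
M ≥ M_K the partial derivative ∂γ/∂xₙ is strictly positive on K ∩ {xₙ ≤ 0};
moreover for all M > 0 it equals 1 on {xₙP(x) = 0}. -/
theorem stmt_11 (n : ℕ) (P : MvPolynomial (Fin (n + 1)) ℝ) (hP : P ≠ 0)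
    (hdeg : P.totalDegree = P.degreeOf (Fin.last n))
    (K : Set (Fin (n + 1) → ℝ)) (hK : IsCompact K) :
    (∃ MK > (0 : ℝ), ∀ M : ℝ, MK ≤ M → ∀ x ∈ K, x (Fin.last n) ≤ 0 →
      0 < fderiv ℝ
        (fun y : Fin (n + 1) → ℝ =>
          y (Fin.last n) * (1 - y (Fin.last n) * (eval y P) ^ 2 / M) ^ 2)
        x (Pi.single (Fin.last n) 1)) ∧
    (∀ M : ℝ, 0 < M → ∀ x : Fin (n + 1) → ℝ, x (Fin.last n) * eval x P = 0 →
      fderiv ℝ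
        (fun y : Fin (n + 1) → ℝ =>
          y (Fin.last n) * (1 - y (Fin.last n) * (eval y P) ^ 2 / M) ^ 2)
        x (Pi.single (Fin.last n) 1) = 1) :=
  stmt_11_general n P K hK
end

section
/- Let K ⊂ ℝⁿ be an n-dimensional convex polyhedron, let πₙ : ℝⁿ → ℝⁿ be the projection (x₁,…,xₙ) ↦ (x₁,…,x_{n−1},0), let a ∈ ℝ^{n−1} be such that I_a := πₙ^{-1}(a,0) ∩ K is nonempty, and let p be a boundary point of the (possibly unbounded) interval I_a. Then there exists a facet F of K not parallel to the vector eₙ = (0,…,0,1) such that p ∈ F. -/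
/-- If K ⊂ ℝ^{n+1} is a full-dimensional convex polyhedron given by a minimal
presentation of half-spaces {x | ∑ⱼ uᵢⱼxⱼ ≤ cᵢ}, the fiber
I_a = {t | (a,t) ∈ K} is nonempty and t₀ is a boundary point of I_a, then the
point (a,t₀) lies on a facet of K whose hyperplane is nonparallel to eₙ. -/
theorem stmt_13 (n m : ℕ) (u : Fin m → Fin (n + 1) → ℝ) (c : Fin m → ℝ)
    (K : Set (Fin (n + 1) → ℝ))
    (hK : K = {x | ∀ i, ∑ j, u i j * x j ≤ c i})
    (hdim : (interior K).Nonempty)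
    (hmin : ∀ i, {x : Fin (n + 1) → ℝ | ∀ k, k ≠ i → ∑ j, u k j * x j ≤ c k} ≠ K)
    (a : Fin n → ℝ) (t₀ : ℝ)
    (hne : {t : ℝ | (Fin.snoc a t : Fin (n + 1) → ℝ) ∈ K}.Nonempty)
    (hfr : t₀ ∈ frontier {t : ℝ | (Fin.snoc a t : Fin (n + 1) → ℝ) ∈ K}) :
    ∃ i, (∑ j, u i j * (Fin.snoc a t₀ : Fin (n + 1) → ℝ) j) = c i ∧ u i (Fin.last n) ≠ 0 := by
  subst hK
  -- rewrite the sum over Fin (n+1) as an affine function of t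
  have key : ∀ (i : Fin m) (t : ℝ),
      (∑ j, u i j * (Fin.snoc a t : Fin (n + 1) → ℝ) j) =
        (∑ j : Fin n, u i j.castSucc * a j) + u i (Fin.last n) * t := by
    intro i t
    rw [Fin.sum_univ_castSucc]
    simp
  set S : Set ℝ := {t : ℝ | (Fin.snoc a t : Fin (n + 1) → ℝ) ∈
      {x : Fin (n + 1) → ℝ | ∀ i, ∑ j, u i j * x j ≤ c i}} with hS
  have hSclosed : IsClosed S := by
    have : S = ⋂ i, {t : ℝ | (∑ j : Fin n, u i j.castSucc * a j)
        + u i (Fin.last n) * t ≤ c i} := by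
      ext t
      simp only [hS, Set.mem_setOf_eq, Set.mem_iInter, key]
    rw [this]
    exact isClosed_iInter fun i => isClosed_le (by fun_prop) continuous_const
  have ht₀S : t₀ ∈ S := hSclosed.closure_eq ▸ hfr.1
  by_contra hcon
  push_neg at hcon
  -- hcon : ∀ i, sum = c i → u i last = 0
  have hmem : ∀ᶠ t in nhds t₀, ∀ i, ∑ j, u i j * (Fin.snoc a t : Fin (n + 1) → ℝ) j ≤ c i := by
    rw [Filter.eventually_all]
    intro i
    by_cases hz : u i (Fin.last n) = 0
    · apply Filter.Eventually.of_forall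
      intro t
      rw [key i t, hz]
      have := ht₀S i
      rw [key i t₀, hz] at this
      simpa using this
    · have hle : (∑ j : Fin n, u i j.castSucc * a j) + u i (Fin.last n) * t₀ ≤ c i := by
        rw [← key i t₀]; exact ht₀S i
      have hlt : (∑ j : Fin n, u i j.castSucc * a j) + u i (Fin.last n) * t₀ < c i := by
        rcases lt_or_eq_of_le hle with h | h
        · exact h
        · exact absurd (hcon i (by rw [key i t₀]; exact h)) hz
      have hopen : IsOpen {t : ℝ | (∑ j : Fin n, u i j.castSucc * a j)
          + u i (Fin.last n) * t < c i} := isOpen_lt (by fun_prop) continuous_const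
      filter_upwards [hopen.mem_nhds hlt] with t ht
      rw [key i t]
      exact le_of_lt ht
  have : t₀ ∈ interior S := by
    rw [mem_interior_iff_mem_nhds]
    exact hmem
  exact hfr.2 this
end

section
/- For n ≥ 2, there exists a polynomial map f : ℝⁿ → ℝⁿ whose image is the complement ℝⁿ \ Q̄ₙ of the closed orthant Q̄ₙ := {x ∈ ℝⁿ : x₁ ≥ 0, …, xₙ ≥ 0}. -/
/-!
The map is a composite of two polynomial maps. First, `(a, b) ↦ (a² + (ab - 1)², b (ab - 1))`
sends `ℝ²` onto the open half-plane `{T > 0}`, so `ℝⁿ` maps onto `(0, ∞) × ℝⁿ⁻¹`. Second,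
`(d, c) ↦ ((c_j (d - (j + 1)))_j, -d (1 + ∑ c_j³ (d - (j + 1))))` sends `(0, ∞) × ℝᴺ` onto the
complement of the closed orthant of `ℝᴺ⁺¹`: if the first `N` coordinates are `≥ 0`, then
`c_j³ (d - (j + 1)) = c_j² · c_j (d - (j + 1)) ≥ 0` and the last coordinate is negative.
Conversely, prescribing the first coordinates `z_j` forces `c_j = z_j / (d - (j + 1))`, and the last
coordinate becomes `ψ d = -d (1 + ∑ z_j³ / (d - (j + 1))²)`. This tends to `+∞` just right of the
pole of a negative `z_j`, to `-∞` just left of the pole of a positive `z_j` and as `d → ∞`, and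
`ψ 0 = 0`; so the intermediate value theorem, applied between suitable poles, hits every value
when some `z_j < 0`, and every negative value otherwise.
-/
open Filter Topology Set

section PoleSum

variable {ι : Type*} [Fintype ι] (p z : ι → ℝ)

noncomputable def poleSum (d : ℝ) : ℝ := ∑ j, z j ^ 3 / (d - p j) ^ 2

lemma poleSum_neg : poleSum p (-z) = -poleSum p z := by
  ext d
  simp [poleSum, Odd.neg_pow (by decide : Odd 3), neg_div]

lemma continuousOn_poleSum {s : Set ℝ} (hs : ∀ d ∈ s, ∀ j, z j ≠ 0 → d ≠ p j) :
    ContinuousOn (poleSum p z) s := by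
  refine continuousOn_finsetSum _ fun j _ => ?_
  by_cases hj : z j = 0
  · simpa [hj] using continuousOn_const
  · exact continuousOn_const.div (by fun_prop) fun d hd =>
      pow_ne_zero 2 (sub_ne_zero.2 (hs d hd j hj))

lemma tendsto_poleSum_atTop : Tendsto (poleSum p z) atTop (𝓝 0) := by
  have hden (j : ι) : Tendsto (fun d : ℝ => (d - p j) ^ 2) atTop atTop :=
    (tendsto_pow_atTop two_ne_zero).comp (tendsto_atTop_add_const_right _ _ tendsto_id)
  have := tendsto_finsetSum Finset.univ fun j _ =>
    (tendsto_const_nhds (x := z j ^ 3)).div_atTop (hden j)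
  rwa [Finset.sum_const_zero] at this

lemma tendsto_poleSum_nhdsNE_of_pos (hp : Function.Injective p) {k : ι} (hk : 0 < z k) :
    Tendsto (poleSum p z) (𝓝[≠] p k) atTop := by
  classical
  have hrest : Tendsto (fun d => ∑ j ∈ Finset.univ.erase k, z j ^ 3 / (d - p j) ^ 2) (𝓝[≠] p k)
      (𝓝 (∑ j ∈ Finset.univ.erase k, z j ^ 3 / (p k - p j) ^ 2)) := by
    refine tendsto_nhdsWithin_of_tendsto_nhds (tendsto_finsetSum _ fun j hj => ?_)
    have hkj : p k - p j ≠ 0 := sub_ne_zero.2 (hp.ne (Finset.ne_of_mem_erase hj).symm)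
    exact (continuousAt_const.div ((continuousAt_id.sub continuousAt_const).pow 2)
      (pow_ne_zero 2 hkj)).tendsto
  have hsq : Tendsto (fun d => (d - p k) ^ 2) (𝓝[≠] p k) (𝓝[>] 0) := by
    refine tendsto_nhdsWithin_iff.2 ⟨?_, ?_⟩
    · have : Tendsto (fun d => (d - p k) ^ 2) (𝓝 (p k)) (𝓝 ((p k - p k) ^ 2)) :=
        (by fun_prop : Continuous fun d => (d - p k) ^ 2).tendsto _
      simpa using tendsto_nhdsWithin_of_tendsto_nhds this
    · filter_upwards [self_mem_nhdsWithin] with d hd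
      exact sq_pos_of_ne_zero (sub_ne_zero.2 hd)
  have hpole : Tendsto (fun d => z k ^ 3 / (d - p k) ^ 2) (𝓝[≠] p k) atTop := by
    simpa only [div_eq_mul_inv, Pi.inv_apply] using
      hsq.inv_tendsto_nhdsGT_zero.const_mul_atTop (pow_pos hk 3)
  refine (hrest.add_atTop hpole).congr fun d => ?_
  simp only [poleSum]
  rw [← Finset.add_sum_erase _ _ (Finset.mem_univ k), add_comm]

lemma tendsto_neg_mul_one_add_poleSum_atTop :
    Tendsto (fun d => -d * (1 + poleSum p z d)) atTop atBot := by
  have h : Tendsto (fun d => 1 + poleSum p z d) atTop (𝓝 1) := by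
    simpa using (tendsto_poleSum_atTop p z).const_add 1
  exact tendsto_neg_atTop_atBot.atBot_mul_pos one_pos h

variable {p z} (hp : Function.Injective p) {k : ι} (hpk : 0 < p k)
include hp hpk

lemma tendsto_neg_mul_one_add_poleSum_nhdsNE_of_pos (hk : 0 < z k) :
    Tendsto (fun d => -d * (1 + poleSum p z d)) (𝓝[≠] p k) atBot :=
  (tendsto_nhdsWithin_of_tendsto_nhds tendsto_id.neg).neg_mul_atTop (neg_lt_zero.2 hpk)
    (tendsto_atTop_add_const_left _ 1 (tendsto_poleSum_nhdsNE_of_pos p z hp hk))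

lemma tendsto_neg_mul_one_add_poleSum_nhdsNE_of_neg (hk : z k < 0) :
    Tendsto (fun d => -d * (1 + poleSum p z d)) (𝓝[≠] p k) atTop := by
  have h := tendsto_poleSum_nhdsNE_of_pos p (-z) hp (neg_pos.2 hk)
  rw [poleSum_neg] at h
  exact (tendsto_nhdsWithin_of_tendsto_nhds tendsto_id.neg).neg_mul_atBot (neg_lt_zero.2 hpk)
    (tendsto_atBot_add_const_left _ 1 (tendsto_neg_atTop_iff.1 h))

end PoleSum

section PoleSumRoot

variable {ι : Type*} [Fintype ι] {p z : ι → ℝ} (hp : Function.Injective p) (hp0 : ∀ j, 0 < p j)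
include hp hp0

lemma exists_gt_neg_mul_one_add_poleSum_lt {d₁ w : ℝ} (hd₁ : ∀ j, z j ≠ 0 → d₁ ≠ p j)
    (hneg : ∀ j, z j < 0 → p j < d₁) :
    ∃ d₂, d₁ < d₂ ∧ -d₂ * (1 + poleSum p z d₂) < w ∧
      ∀ d ∈ Icc d₁ d₂, ∀ j, z j ≠ 0 → d ≠ p j := by
  classical
  set K := Finset.univ.filter fun j => z j ≠ 0 ∧ d₁ < p j
  have hmemK {d} (hd : d₁ ≤ d) {j} (hj : z j ≠ 0) (hdj : d = p j) : j ∈ K := by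
    simpa [K, hj] using lt_of_le_of_ne (hdj ▸ hd) (hd₁ j hj)
  rcases K.eq_empty_or_nonempty with hK | hK
  · obtain ⟨d₂, hψ, hd₂⟩ := (((tendsto_neg_mul_one_add_poleSum_atTop p z).eventually
      (eventually_lt_atBot w)).and (eventually_gt_atTop d₁)).exists
    exact ⟨d₂, hd₂, hψ, fun d hd j hj hdj => by simpa [hK] using hmemK hd.1 hj hdj⟩
  · obtain ⟨k, hkK, hkmin⟩ := K.exists_min_image p hK
    simp only [K, Finset.mem_filter, Finset.mem_univ, true_and] at hkK
    have hzk : 0 < z k := lt_of_le_of_ne (not_lt.1 fun h => (hneg k h).not_gt hkK.2) hkK.1.symm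
    have hψk := (tendsto_neg_mul_one_add_poleSum_nhdsNE_of_pos hp (hp0 k) hzk).mono_left
      (nhdsLT_le_nhdsNE _)
    obtain ⟨d₂, hψ, hd₂⟩ :=
      ((hψk.eventually (eventually_lt_atBot w)).and (Ioo_mem_nhdsLT hkK.2)).exists
    refine ⟨d₂, hd₂.1, hψ, fun d hd j hj hdj => ?_⟩
    linarith [hkmin j (hmemK hd.1 hj hdj), hd.2, hd₂.2]

lemma exists_pos_eq_neg_mul_one_add_poleSum {w : ℝ} (h : (∃ j, z j < 0) ∨ w < 0) :
    ∃ d, 0 < d ∧ (∀ j, z j ≠ 0 → d ≠ p j) ∧ -d * (1 + poleSum p z d) = w := by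
  classical
  obtain ⟨d₁, hd₁0, hd₁, hneg, hψ₁⟩ : ∃ d₁, 0 ≤ d₁ ∧ (∀ j, z j ≠ 0 → d₁ ≠ p j) ∧
      (∀ j, z j < 0 → p j < d₁) ∧ w < -d₁ * (1 + poleSum p z d₁) := by
    by_cases hz : ∃ j, z j < 0
    · obtain ⟨j₀, hj₀⟩ := hz
      obtain ⟨a, ha, hamax⟩ :=
        (Finset.univ.filter fun j => z j < 0).exists_max_image p ⟨j₀, by simpa⟩
      simp only [Finset.mem_filter, Finset.mem_univ, true_and] at ha hamax
      have hoff (j : ι) : ∀ᶠ d in 𝓝[>] p a, d ≠ p j := by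
        rcases eq_or_ne (p a) (p j) with h | h
        · filter_upwards [self_mem_nhdsWithin] with d hd using h ▸ ne_of_gt hd
        · exact eventually_ne_nhdsWithin h
      have hψa := (tendsto_neg_mul_one_add_poleSum_nhdsNE_of_neg hp (hp0 a) ha).mono_left
        (nhdsGT_le_nhdsNE _)
      obtain ⟨d₁, ⟨hψ, hd₁⟩, hpa⟩ := ((hψa.eventually (eventually_gt_atTop w)).and
        (eventually_all.2 hoff) |>.and self_mem_nhdsWithin).exists
      exact ⟨d₁, (hp0 a).le.trans (le_of_lt hpa), fun j _ => hd₁ j,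
        fun j hj => (hamax j hj).trans_lt hpa, hψ⟩
    · simp only [not_exists, not_lt] at hz
      exact ⟨0, le_rfl, fun j _ => (hp0 j).ne, fun j hj => absurd hj (hz j).not_gt,
        by simpa using h.resolve_left (by simpa using hz)⟩
  obtain ⟨d₂, hd₁₂, hψ₂, hpoles⟩ := exists_gt_neg_mul_one_add_poleSum_lt hp hp0 (w := w) hd₁ hneg
  have hcont : ContinuousOn (fun d => -d * (1 + poleSum p z d)) (Icc d₁ d₂) :=
    continuousOn_neg.mul (continuousOn_const.add (continuousOn_poleSum p z hpoles))
  obtain ⟨d, hd, hψ⟩ := intermediate_value_Ioo' hd₁₂.le hcont ⟨hψ₂, hψ₁⟩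
  exact ⟨d, hd₁0.trans_lt hd.1, hpoles d (Ioo_subset_Icc_self hd), hψ⟩

end PoleSumRoot

section ComplOrthant

variable {R S : Type*} [CommRing R] [CommRing S] {N : ℕ}

def complOrthantMap (d : R) (c : Fin N → R) : Fin (N + 1) → R :=
  Fin.snoc (fun j => c j * (d - ((j : ℕ) + 1))) (-d * (1 + ∑ j, c j ^ 3 * (d - ((j : ℕ) + 1))))

lemma comp_complOrthantMap (φ : R →+* S) (d : R) (c : Fin N → R) :
    φ ∘ complOrthantMap d c = complOrthantMap (φ d) (φ ∘ c) := by
  rw [complOrthantMap, Fin.comp_snoc]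
  simp [complOrthantMap, Function.comp_def]

end ComplOrthant

lemma div_pow_three_mul_self (a e : ℝ) : (a / e) ^ 3 * e = a ^ 3 / e ^ 2 := by
  rcases eq_or_ne e 0 with rfl | he
  · simp
  · field_simp

lemma image_complOrthantMap (N : ℕ) :
    (fun q : ℝ × (Fin N → ℝ) => complOrthantMap q.1 q.2) '' (Ioi 0 ×ˢ univ) =
      {y | ∀ i, 0 ≤ y i}ᶜ := by
  ext y
  simp only [mem_image, mem_prod, mem_Ioi, mem_univ, and_true, Prod.exists, mem_compl_iff,
    mem_ofPred_eq, Fin.forall_fin_succ', not_and_or, not_forall, not_le]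
  constructor
  · rintro ⟨d, c, hd, rfl⟩
    by_contra! h
    obtain ⟨hinit, hlast⟩ := h
    simp only [complOrthantMap, Fin.snoc_castSucc, Fin.snoc_last] at hinit hlast
    have hsum : 0 ≤ ∑ j, c j ^ 3 * (d - ((j : ℕ) + 1)) := Finset.sum_nonneg fun j _ => by
      simpa only [pow_succ, mul_assoc] using mul_nonneg (sq_nonneg (c j)) (hinit j)
    nlinarith
  · intro h
    obtain ⟨d, hd, hpoles, hlast⟩ := exists_pos_eq_neg_mul_one_add_poleSum
      (p := fun j : Fin N => ((j : ℕ) : ℝ) + 1) (z := fun j => y j.castSucc)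
      (fun i j hij => by simpa [Fin.ext_iff] using hij) (fun j => by positivity) h
    refine ⟨d, fun j => y j.castSucc / (d - ((j : ℕ) + 1)), hd, ?_⟩
    conv_rhs => rw [← Fin.snoc_init_self y, ← hlast]
    simp only [complOrthantMap, poleSum, div_pow_three_mul_self]
    congr 1
    funext j
    by_cases hj : y j.castSucc = 0
    · simp [Fin.init, hj]
    · exact div_mul_cancel₀ _ (sub_ne_zero.2 (hpoles j hj))

lemma sq_add_sq_mul_sub_one_pos (a b : ℝ) : 0 < a ^ 2 + (a * b - 1) ^ 2 := by
  rcases eq_or_ne a 0 with rfl | ha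
  · norm_num
  · exact add_pos_of_pos_of_nonneg (sq_pos_of_ne_zero ha) (sq_nonneg _)

lemma exists_sq_add_sq_mul_sub_one_eq {T : ℝ} (hT : 0 < T) (Q : ℝ) :
    ∃ a b : ℝ, a ^ 2 + (a * b - 1) ^ 2 = T ∧ b * (a * b - 1) = Q := by
  rcases eq_or_ne Q 0 with rfl | hQ
  · have hsqrt : √T ≠ 0 := (Real.sqrt_pos.2 hT).ne'
    exact ⟨√T, (√T)⁻¹, by simp [hsqrt, Real.sq_sqrt hT.le], by simp [hsqrt]⟩
  -- `u` will be `a * b - 1`, with `b = Q / u` and `a = u * (1 + u) / Q`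
  obtain ⟨u, hu, hφ⟩ : ∃ u ∈ Ioo 0 (T + 1), u ^ 2 * ((1 + u) ^ 2 + Q ^ 2) = T * Q ^ 2 := by
    have hQ2 : 0 < Q ^ 2 := sq_pos_of_ne_zero hQ
    refine intermediate_value_Ioo (by linarith) (by fun_prop) ⟨by simpa using by positivity, ?_⟩
    nlinarith [sq_nonneg ((T + 1) * (2 + T)), mul_pos hT hQ2]
  have hu0 : u ≠ 0 := hu.1.ne'
  have hab : u * (1 + u) / Q * (Q / u) - 1 = u := by field_simp; ring
  refine ⟨u * (1 + u) / Q, Q / u, ?_, ?_⟩ <;> rw [hab]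
  · field_simp
    linear_combination hφ
  · field_simp

section HalfSpace

variable {R S : Type*} [CommRing R] [CommRing S] {m : ℕ}

def halfSpaceMap (x : Fin (m + 2) → R) : R × (Fin (m + 1) → R) :=
  (x 0 ^ 2 + (x 0 * x 1 - 1) ^ 2, Fin.cons (x 1 * (x 0 * x 1 - 1)) fun j => x j.succ.succ)

lemma map_halfSpaceMap (φ : R →+* S) (x : Fin (m + 2) → R) :
    Prod.map φ (φ ∘ ·) (halfSpaceMap x) = halfSpaceMap (φ ∘ x) := by
  simp only [halfSpaceMap, Prod.map_apply, Fin.comp_cons]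
  simp [Function.comp_def]

end HalfSpace

lemma range_halfSpaceMap (m : ℕ) :
    range (halfSpaceMap (R := ℝ) (m := m)) = Ioi 0 ×ˢ univ := by
  ext q
  simp only [mem_range, mem_prod, mem_Ioi, mem_univ, and_true]
  constructor
  · rintro ⟨x, rfl⟩
    exact sq_add_sq_mul_sub_one_pos _ _
  · intro hq
    obtain ⟨a, b, h₁, h₂⟩ := exists_sq_add_sq_mul_sub_one_eq hq (q.2 0)
    refine ⟨Fin.cons a (Fin.cons b (Fin.tail q.2)), ?_⟩
    simp [halfSpaceMap, h₁, h₂]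

open MvPolynomial

/-- For n ≥ 2 the complement of the closed orthant {x₁ ≥ 0, …, xₙ ≥ 0} is a
polynomial image of ℝⁿ. -/
theorem stmt_16 (n : ℕ) (hn : 2 ≤ n) :
    ∃ f : Fin n → MvPolynomial (Fin n) ℝ,
      Set.range (fun x i => eval x (f i)) =
        ({x : Fin n → ℝ | ∀ i, 0 ≤ x i}ᶜ : Set (Fin n → ℝ)) := by
  obtain ⟨m, rfl⟩ := Nat.exists_eq_add_of_le' hn
  set H := halfSpaceMap (X : Fin (m + 2) → MvPolynomial (Fin (m + 2)) ℝ)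
  refine ⟨complOrthantMap H.1 H.2, ?_⟩
  have heval : (fun x i => eval x (complOrthantMap H.1 H.2 i)) =
      fun x => complOrthantMap (halfSpaceMap x).1 (halfSpaceMap x).2 := by
    ext1 x
    have hX : (eval x : MvPolynomial (Fin (m + 2)) ℝ →+* ℝ) ∘ X = x :=
      funext fun i => eval_X ..
    have hH : halfSpaceMap x = Prod.map (eval x) (eval x ∘ ·) H := by
      rw [map_halfSpaceMap, hX]
    rw [hH]
    exact comp_complOrthantMap (eval x) H.1 H.2
  rw [heval, ← image_complOrthantMap, ← range_halfSpaceMap, ← range_comp]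
  rfl
end

section
/- Define h : ℝ → ℝ by h(t) = t·g(t) with g(t) = aₙt⁴ + bₙt² + cₙ, where for an integer n ≥ 2: aₙ = (1+2n)/(2n³(1+n)²), bₙ = −(1+2n+3n²+4n³)/(2n³(1+n)²), cₙ = (3+6n+4n²+2n³)/(2n(1+n)²). Then h(0) = 0, h(1) = h(n) = 1, h'(n) = 0, h is increasing on [n, ∞), h(t) ≥ 1 for all t ∈ (1, n), and h([0,∞)) = [0,∞); consequently h([μ,∞)) = [1,∞) for every μ with 1 ≤ μ ≤ n. -/
/-!
With `N = n`, one has `2N³(1+N)²(1+2N) (h(t) - 1) = (t - 1)(t - N)² Q(t)` for a quadratic `Q`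
that is positive on `[0, ∞)`, so `h(1) = h(N) = 1`, `h'(N) = 0` and `h ≥ 1` on `[1, N]`. Likewise
`2N³(1+N)² h'(t) = (t² - N²)(5(1+2N)t² - (3+6N+4N²+2N³))`, which is positive for `t > N ≥ 1`.
The quadratic `aₙs² + bₙs + cₙ` has negative discriminant, so `h(t) ≥ 0` for `t ≥ 0`. As
`h → ∞`, the intermediate value theorem, started at the minimum points `0` and `N`, gives the
two images.
-/

open Set Filter

theorem image_Ici_eq_Ici_of_isMinOn {α δ : Type*} [ConditionallyCompleteLinearOrder α]
    [TopologicalSpace α] [OrderTopology α] [DenselyOrdered α]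
    [LinearOrder δ] [TopologicalSpace δ] [OrderClosedTopology δ] {f : α → δ} {μ x₀ : α}
    (hf : ContinuousOn f (Ici μ)) (htop : Tendsto f atTop atTop)
    (hx₀ : μ ≤ x₀) (hmin : IsMinOn f (Ici μ) x₀) :
    f '' Ici μ = Ici (f x₀) := by
  refine subset_antisymm ?_ ?_
  · rintro _ ⟨t, ht, rfl⟩
    exact hmin ht
  · have hsub : Ici x₀ ⊆ Ici μ := Ici_subset_Ici.mpr hx₀
    exact (intermediate_value_Ici (hf.mono hsub) htop).trans (image_mono hsub)

def oddQuintic (a b c t : ℝ) : ℝ := t * (a * t ^ 4 + b * t ^ 2 + c)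

section OddQuintic

variable {a b c : ℝ}

theorem oddQuintic_zero : oddQuintic a b c 0 = 0 := by
  simp [oddQuintic]

theorem hasDerivAt_oddQuintic (t : ℝ) :
    HasDerivAt (oddQuintic a b c) (5 * a * t ^ 4 + 3 * b * t ^ 2 + c) t := by
  have hpoly : oddQuintic a b c = fun x => a * x ^ 5 + b * x ^ 3 + c * x := by
    funext x; simp only [oddQuintic]; ring
  rw [hpoly]
  refine ((((hasDerivAt_pow 5 t).const_mul a).add ((hasDerivAt_pow 3 t).const_mul b)).add
    ((hasDerivAt_id t).const_mul c)).congr_deriv ?_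
  push_cast; ring

theorem continuous_oddQuintic : Continuous (oddQuintic a b c) :=
  continuous_iff_continuousAt.mpr fun t => (hasDerivAt_oddQuintic t).continuousAt

theorem tendsto_oddQuintic_atTop (ha : 0 < a) : Tendsto (oddQuintic a b c) atTop atTop := by
  have hsq : Tendsto (fun t : ℝ => t ^ 2) atTop atTop := tendsto_pow_atTop two_ne_zero
  have hlin : Tendsto (fun t : ℝ => a * t ^ 2 + b) atTop atTop :=
    tendsto_atTop_add_const_right _ b (hsq.const_mul_atTop ha)
  have hquad : Tendsto (fun t : ℝ => t ^ 2 * (a * t ^ 2 + b) + c) atTop atTop :=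
    tendsto_atTop_add_const_right _ c (hsq.atTop_mul_atTop₀ hlin)
  refine (tendsto_id.atTop_mul_atTop₀ hquad).congr fun t => ?_
  simp only [oddQuintic, id]; ring

theorem oddQuintic_nonneg (ha : 0 < a) (hdisc : b ^ 2 < 4 * a * c) {t : ℝ} (ht : 0 ≤ t) :
    0 ≤ oddQuintic a b c t := by
  have hsq : 4 * a * (a * t ^ 4 + b * t ^ 2 + c) =
      (2 * a * t ^ 2 + b) ^ 2 + (4 * a * c - b ^ 2) := by
    ring
  have hg : 0 < a * t ^ 4 + b * t ^ 2 + c :=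
    pos_of_mul_pos_right (by rw [hsq]; nlinarith [sq_nonneg (2 * a * t ^ 2 + b)]) (by positivity)
  exact mul_nonneg ht hg.le

end OddQuintic

-- Coefficients of the unique odd quintic with `h(1) = h(N) = 1` and `h'(N) = 0`.
noncomputable def quinticA (N : ℝ) : ℝ := (1 + 2 * N) / (2 * N ^ 3 * (1 + N) ^ 2)

noncomputable def quinticB (N : ℝ) : ℝ :=
  -((1 + 2 * N + 3 * N ^ 2 + 4 * N ^ 3) / (2 * N ^ 3 * (1 + N) ^ 2))

noncomputable def quinticC (N : ℝ) : ℝ :=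
  (3 + 6 * N + 4 * N ^ 2 + 2 * N ^ 3) / (2 * N * (1 + N) ^ 2)

noncomputable def quintic (N : ℝ) : ℝ → ℝ :=
  oddQuintic (quinticA N) (quinticB N) (quinticC N)

section Quintic

variable {N : ℝ}

theorem quinticA_pos (hN : 0 < N) : 0 < quinticA N := by
  unfold quinticA; positivity

theorem quintic_zero : quintic N 0 = 0 := oddQuintic_zero

theorem continuous_quintic : Continuous (quintic N) := continuous_oddQuintic

theorem tendsto_quintic_atTop (hN : 0 < N) : Tendsto (quintic N) atTop atTop :=
  tendsto_oddQuintic_atTop (quinticA_pos hN)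

theorem quinticB_sq_lt (hN : 1 ≤ N) : quinticB N ^ 2 < 4 * quinticA N * quinticC N := by
  have hdisc : 4 * quinticA N * quinticC N - quinticB N ^ 2 =
      (16 * N ^ 5 + 39 * N ^ 4 + 28 * N ^ 3 + 2 * N ^ 2 - 4 * N - 1) /
        (2 * N ^ 3 * (1 + N) ^ 2) ^ 2 := by
    unfold quinticA quinticB quinticC; field_simp; ring
  have hnum : 0 < 16 * N ^ 5 + 39 * N ^ 4 + 28 * N ^ 3 + 2 * N ^ 2 - 4 * N - 1 := by
    nlinarith [pow_le_pow_left₀ zero_le_one hN 3, pow_le_pow_left₀ zero_le_one hN 4,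
      pow_le_pow_left₀ zero_le_one hN 5]
  rw [← sub_pos, hdisc]
  positivity

theorem quintic_sub_one_eq (hN : 0 < N) (t : ℝ) :
    2 * N ^ 3 * (1 + N) ^ 2 * (1 + 2 * N) * (quintic N t - 1) =
      (t - 1) * (t - N) ^ 2 *
        ((1 + 2 * N) ^ 2 * t ^ 2 + (1 + 2 * N) ^ 3 * t + 2 * N * (1 + N) ^ 2 * (1 + 2 * N)) := by
  unfold quintic oddQuintic quinticA quinticB quinticC; field_simp; ring

theorem quintic_deriv_eq (hN : 0 < N) (t : ℝ) :
    2 * N ^ 3 * (1 + N) ^ 2 * (5 * quinticA N * t ^ 4 + 3 * quinticB N * t ^ 2 + quinticC N) =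
      (t ^ 2 - N ^ 2) * (5 * (1 + 2 * N) * t ^ 2 - (3 + 6 * N + 4 * N ^ 2 + 2 * N ^ 3)) := by
  unfold quinticA quinticB quinticC; field_simp; ring

theorem quintic_one (hN : 0 < N) : quintic N 1 = 1 := by
  have h := quintic_sub_one_eq hN 1
  rw [sub_self, zero_mul, zero_mul] at h
  exact sub_eq_zero.mp ((mul_eq_zero.mp h).resolve_left (by positivity))

theorem quintic_self (hN : 0 < N) : quintic N N = 1 := by
  have h := quintic_sub_one_eq hN N
  rw [sub_self, zero_pow two_ne_zero, mul_zero, zero_mul] at h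
  exact sub_eq_zero.mp ((mul_eq_zero.mp h).resolve_left (by positivity))

theorem deriv_quintic_self (hN : 0 < N) : deriv (quintic N) N = 0 := by
  have h := quintic_deriv_eq hN N
  rw [sub_self, zero_mul] at h
  rw [quintic, (hasDerivAt_oddQuintic N).deriv]
  exact (mul_eq_zero.mp h).resolve_left (by positivity)

theorem one_le_quintic_of_mem_Icc (hN : 0 < N) {t : ℝ} (ht : t ∈ Icc 1 N) :
    1 ≤ quintic N t := by
  have ht0 : 0 ≤ t := zero_le_one.trans ht.1
  have hfactor : 0 ≤ (t - 1) * (t - N) ^ 2 *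
      ((1 + 2 * N) ^ 2 * t ^ 2 + (1 + 2 * N) ^ 3 * t + 2 * N * (1 + N) ^ 2 * (1 + 2 * N)) :=
    mul_nonneg (mul_nonneg (sub_nonneg.mpr ht.1) (sq_nonneg _)) (by positivity)
  rw [← quintic_sub_one_eq hN] at hfactor
  exact sub_nonneg.mp (nonneg_of_mul_nonneg_right hfactor (by positivity))

theorem quintic_deriv_pos (hN : 1 ≤ N) {t : ℝ} (ht : N < t) :
    0 < 5 * quinticA N * t ^ 4 + 3 * quinticB N * t ^ 2 + quinticC N := by
  have hsq : 0 < t ^ 2 - N ^ 2 := by nlinarith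
  have hq : 0 < 5 * (1 + 2 * N) * t ^ 2 - (3 + 6 * N + 4 * N ^ 2 + 2 * N ^ 3) := by nlinarith
  have hfactor := mul_pos hsq hq
  rw [← quintic_deriv_eq (by linarith)] at hfactor
  exact pos_of_mul_pos_right hfactor (by positivity)

theorem strictMonoOn_quintic (hN : 1 ≤ N) : StrictMonoOn (quintic N) (Ici N) := by
  refine strictMonoOn_of_deriv_pos (convex_Ici N) continuous_quintic.continuousOn fun t ht => ?_
  rw [interior_Ici] at ht
  rw [quintic, (hasDerivAt_oddQuintic t).deriv]
  exact quintic_deriv_pos hN ht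

theorem one_le_quintic (hN : 1 ≤ N) {t : ℝ} (ht : 1 ≤ t) : 1 ≤ quintic N t := by
  rcases le_total t N with htN | hNt
  · exact one_le_quintic_of_mem_Icc (by linarith) ⟨ht, htN⟩
  · rw [← quintic_self (by linarith : 0 < N)]
    exact (strictMonoOn_quintic hN).monotoneOn self_mem_Ici hNt hNt

theorem image_quintic_Ici_zero (hN : 1 ≤ N) : quintic N '' Ici 0 = Ici 0 := by
  have hmin : IsMinOn (quintic N) (Ici 0) 0 := fun t ht => by
    rw [mem_ofPred_eq, quintic_zero]
    exact oddQuintic_nonneg (quinticA_pos (by linarith)) (quinticB_sq_lt hN) ht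
  rw [image_Ici_eq_Ici_of_isMinOn continuous_quintic.continuousOn
    (tendsto_quintic_atTop (by linarith)) le_rfl hmin, quintic_zero]

theorem image_quintic_Ici (hN : 1 ≤ N) {μ : ℝ} (h1μ : 1 ≤ μ) (hμN : μ ≤ N) :
    quintic N '' Ici μ = Ici 1 := by
  have hself := quintic_self (by linarith : 0 < N)
  have hmin : IsMinOn (quintic N) (Ici μ) N := fun t ht => by
    rw [mem_ofPred_eq, hself]
    exact one_le_quintic hN (h1μ.trans ht)
  rw [image_Ici_eq_Ici_of_isMinOn continuous_quintic.continuousOn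
    (tendsto_quintic_atTop (by linarith)) hμN hmin, hself]

end Quintic

/-- Properties of the auxiliary quintic h(t) = t(aₙt⁴ + bₙt² + cₙ). -/
theorem stmt_17 (n : ℕ) (hn : 2 ≤ n) (a b c : ℝ)
    (ha : a = (1 + 2 * (n : ℝ)) / (2 * (n : ℝ) ^ 3 * (1 + (n : ℝ)) ^ 2))
    (hb : b = -((1 + 2 * (n : ℝ) + 3 * (n : ℝ) ^ 2 + 4 * (n : ℝ) ^ 3) /
      (2 * (n : ℝ) ^ 3 * (1 + (n : ℝ)) ^ 2)))
    (hc : c = (3 + 6 * (n : ℝ) + 4 * (n : ℝ) ^ 2 + 2 * (n : ℝ) ^ 3) /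
      (2 * (n : ℝ) * (1 + (n : ℝ)) ^ 2))
    (h : ℝ → ℝ) (hh : h = fun t => t * (a * t ^ 4 + b * t ^ 2 + c)) :
    h 0 = 0 ∧ h 1 = 1 ∧ h (n : ℝ) = 1 ∧ deriv h (n : ℝ) = 0 ∧
    StrictMonoOn h (Set.Ici (n : ℝ)) ∧
    (∀ t : ℝ, 1 < t → t < (n : ℝ) → 1 ≤ h t) ∧
    h '' Set.Ici 0 = Set.Ici 0 ∧
    (∀ μ : ℝ, 1 ≤ μ → μ ≤ (n : ℝ) → h '' Set.Ici μ = Set.Ici 1) := by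
  have hN : (1 : ℝ) ≤ n := by exact_mod_cast one_le_two.trans hn
  have hN0 : (0 : ℝ) < n := by linarith
  obtain rfl : h = quintic n := by
    subst ha hb hc hh; rfl
  exact ⟨quintic_zero, quintic_one hN0, quintic_self hN0, deriv_quintic_self hN0,
    strictMonoOn_quintic hN, fun t h1t htn => one_le_quintic_of_mem_Icc hN0 ⟨h1t.le, htn.le⟩,
    image_quintic_Ici_zero hN, fun μ h1μ hμn => image_quintic_Ici hN h1μ hμn⟩
end

section
/- The image of the polynomial map g : ℝ² → ℝ², (x, y) ↦ ((xy − 1)² + x², y(xy − 1)), is the open half-plane (0, ∞) × ℝ. -/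
/-!
Writing `s = x y - 1`, the map reads `(s² + x², y s)`. The first coordinate is positive, since
`x = 0` forces `s = -1`. Conversely `(u, 0)` is the image of `(√u, 1/√u)`, and for `v ≠ 0` one
takes `y = v / s`, `x = s (s + 1) / v`, which reduces `u = s² + x²` to the quartic
`s² ((s + 1)² + v²) = u v²`; it has a positive root by the intermediate value theorem.
-/

def polyMap (x y : ℝ) : ℝ × ℝ := ((x * y - 1) ^ 2 + x ^ 2, y * (x * y - 1))

lemma polyMap_fst_pos (x y : ℝ) : 0 < (polyMap x y).1 := by
  rcases eq_or_ne x 0 with rfl | hx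
  · norm_num [polyMap]
  · exact add_pos_of_nonneg_of_pos (sq_nonneg _) (by positivity)

lemma exists_pos_sq_mul_sq_add_eq {b c : ℝ} (hb : 0 ≤ b) (hc : 0 < c) :
    ∃ t > 0, t ^ 2 * ((t + 1) ^ 2 + b) = c := by
  set M := 1 + c
  have hcont : ContinuousOn (fun t : ℝ => t ^ 2 * ((t + 1) ^ 2 + b)) (Set.Icc 0 M) := by
    fun_prop
  have hcM : c < M ^ 2 * ((M + 1) ^ 2 + b) := by
    have h1 : M ≤ M ^ 2 := by nlinarith
    have h2 : 1 < (M + 1) ^ 2 + b := by nlinarith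
    nlinarith
  obtain ⟨t, ht, hft⟩ :=
    intermediate_value_Ioo (by positivity) hcont ⟨by simpa using hc, hcM⟩
  exact ⟨t, ht.1, hft⟩

lemma polyMap_sqrt_inv {u : ℝ} (hu : 0 < u) : polyMap √u (√u)⁻¹ = (u, 0) := by
  have hs : √u * (√u)⁻¹ = 1 := mul_inv_cancel₀ (Real.sqrt_pos.2 hu).ne'
  simp [polyMap, hs, Real.sq_sqrt hu.le]

lemma polyMap_of_quartic_eq {s u v : ℝ} (hs : s ≠ 0) (hv : v ≠ 0)
    (h : s ^ 2 * ((s + 1) ^ 2 + v ^ 2) = u * v ^ 2) :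
    polyMap (s * (s + 1) / v) (v / s) = (u, v) := by
  have hxy : s * (s + 1) / v * (v / s) - 1 = s := by field_simp; ring
  rw [polyMap, hxy, Prod.mk.injEq]
  constructor
  · field_simp
    linear_combination h
  · field_simp

lemma mem_range_polyMap {u : ℝ} (hu : 0 < u) (v : ℝ) :
    (u, v) ∈ Set.range (Function.uncurry polyMap) := by
  rcases eq_or_ne v 0 with rfl | hv
  · exact ⟨(√u, (√u)⁻¹), polyMap_sqrt_inv hu⟩
  · obtain ⟨s, hs, hquartic⟩ :=
      exists_pos_sq_mul_sq_add_eq (sq_nonneg v) (by positivity : 0 < u * v ^ 2)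
    exact ⟨(s * (s + 1) / v, v / s), polyMap_of_quartic_eq hs.ne' hv hquartic⟩

/-- The image of g(x,y) = ((xy−1)² + x², y(xy−1)) is the open half-plane
(0,∞) × ℝ. -/
theorem stmt_19 :
    Set.range (fun p : ℝ × ℝ =>
        ((p.1 * p.2 - 1) ^ 2 + p.1 ^ 2, p.2 * (p.1 * p.2 - 1))) =
      Set.Ioi (0 : ℝ) ×ˢ (Set.univ : Set ℝ) := by
  change Set.range (Function.uncurry polyMap) = _
  ext ⟨u, v⟩
  constructor
  · rintro ⟨⟨x, y⟩, hxy⟩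
    exact ⟨hxy ▸ polyMap_fst_pos x y, trivial⟩
  · rintro ⟨hu, -⟩
    exact mem_range_polyMap hu v
end
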